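/- Let X be a d-complex, −1 ≤ i ≤ k ≤ d, A ⊆ X(k) and 0 < η < 1. Then ‖S_η^i(A)‖ ≤ η^{−2^{k−i}} · ‖A‖. -/

import Mathlib

open Finset
open scoped symmDiff

noncomputable section

namespace HDExpansion

/-- The faces of cardinality `m` (i.e. of dimension `m - 1`) of a complex `X`. -/
def facesC (X : Finset (Finset ℕ)) (m : ℕ) : Finset (Finset ℕ) :=
  X.filter fun σ => σ.card = m

/-- `X` is a finite, pure, `d`-dimensional abstract simplicial complex:
it is nonempty, closed under subsets, and every face is contained in a face
of cardinality `d + 1`. -/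
def IsComplex (X : Finset (Finset ℕ)) (d : ℕ) : Prop :=
  X.Nonempty ∧ (∀ σ ∈ X, ∀ τ ⊆ σ, τ ∈ X) ∧
    ∀ σ ∈ X, ∃ F ∈ X, σ ⊆ F ∧ F.card = d + 1

/-- The weight of a face `σ` in the `d`-complex `X`:
`w(σ) = |{F ∈ X(d) : σ ⊆ F}| / (binom(d+1,|σ|)·|X(d)|)`. -/
def weightC (X : Finset (Finset ℕ)) (d : ℕ) (σ : Finset ℕ) : ℝ :=
  (((facesC X (d + 1)).filter fun F => σ ⊆ F).card : ℝ) /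
    (((d + 1).choose σ.card * (facesC X (d + 1)).card : ℕ) : ℝ)

/-- The norm of a cochain: `‖A‖ = Σ_{σ∈A} w(σ)`. -/
def normC (X : Finset (Finset ℕ)) (d : ℕ) (A : Finset (Finset ℕ)) : ℝ :=
  ∑ σ ∈ A, weightC X d σ

/-- The coboundary map, sending a cochain of faces of cardinality `m`
(dimension `m-1`) to the set of faces of cardinality `m+1` containing an odd
number of its elements. -/
def cobC (X : Finset (Finset ℕ)) (m : ℕ) (A : Finset (Finset ℕ)) : Finset (Finset ℕ) :=
  (facesC X (m + 1)).filter fun τ => (A.filter fun σ => σ ⊆ τ).card % 2 = 1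

/-- `A` (a cochain of faces of cardinality `m`, i.e. dimension `m-1`) is a
coboundary: `A ∈ B^{m-1}`. -/
def IsCobound (X : Finset (Finset ℕ)) (m : ℕ) (A : Finset (Finset ℕ)) : Prop :=
  ∃ γ ⊆ facesC X (m - 1), cobC X (m - 1) γ = A

/-- `A` (a cochain of faces of cardinality `m`, i.e. dimension `m-1`) is a
cocycle: `A ∈ Z^{m-1}`. -/
def IsCocycle (X : Finset (Finset ℕ)) (m : ℕ) (A : Finset (Finset ℕ)) : Prop :=
  A ⊆ facesC X m ∧ cobC X m A = ∅

/-- `min_{b ∈ B^{m-1}} ‖A + b‖` (cochain sum is symmetric difference `∆`). -/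
def distB (X : Finset (Finset ℕ)) (d m : ℕ) (A : Finset (Finset ℕ)) : ℝ :=
  sInf {r : ℝ | ∃ b, IsCobound X m b ∧ r = normC X d (A ∆ b)}

/-- `min_{z ∈ Z^{m-1}} ‖A + z‖` (cochain sum is symmetric difference `∆`). -/
def distZ (X : Finset (Finset ℕ)) (d m : ℕ) (A : Finset (Finset ℕ)) : ℝ :=
  sInf {r : ℝ | ∃ z, IsCocycle X m z ∧ r = normC X d (A ∆ z)}

/-- The link `X_σ = {τ : σ ∩ τ = ∅, σ ∪ τ ∈ X}`. -/
def link (X : Finset (Finset ℕ)) (σ : Finset ℕ) : Finset (Finset ℕ) :=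
  (X.filter fun ρ => σ ⊆ ρ).image fun ρ => ρ \ σ

/-- The localization `I_σ(A) = {τ ∈ X_σ : τ ∪ σ ∈ A}`. -/
def locF (σ : Finset ℕ) (A : Finset (Finset ℕ)) : Finset (Finset ℕ) :=
  (A.filter fun ρ => σ ⊆ ρ).image fun ρ => ρ \ σ

/-- The lifting `I^σ(A) = {τ ∪ σ : τ ∈ A}`. -/
def liftF (σ : Finset ℕ) (A : Finset (Finset ℕ)) : Finset (Finset ℕ) :=
  A.image fun τ => τ ∪ σ

/-- A cochain of faces of cardinality `m` is minimal if `‖A‖ ≤ ‖A + b‖` for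
every coboundary `b`. -/
def IsMinimal (Y : Finset (Finset ℕ)) (dY m : ℕ) (A : Finset (Finset ℕ)) : Prop :=
  ∀ b, IsCobound Y m b → normC Y dY A ≤ normC Y dY (A ∆ b)

/-- A cochain of faces of cardinality `m` is locally minimal if all its
localizations to links of nonempty faces are minimal. -/
def IsLocallyMinimal (X : Finset (Finset ℕ)) (d m : ℕ) (A : Finset (Finset ℕ)) : Prop :=
  ∀ σ ∈ X, σ ≠ ∅ → IsMinimal (link X σ) (d - σ.card) (m - σ.card) (locF σ A)

/-- `Y` (a `dY`-complex) is a `β`-coboundary expander: for every dimension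
`k = m - 1` with `0 ≤ k ≤ dY - 1` and every `k`-cochain `A ∉ B^k`,
`‖δA‖ ≥ β · min_{b ∈ B^k} ‖A+b‖`. -/
def CobExpander (Y : Finset (Finset ℕ)) (dY : ℕ) (β : ℝ) : Prop :=
  ∀ m : ℕ, 1 ≤ m → m ≤ dY → ∀ A ⊆ facesC Y m, ¬ IsCobound Y m A →
    β * distB Y dY m A ≤ normC Y dY (cobC Y m A)

/-- `E(A,A)`: the edges of `Y` with both vertices in the vertex set `A`
(vertices are identified with singleton faces). -/
def edgesIn (Y : Finset (Finset ℕ)) (A : Finset (Finset ℕ)) : Finset (Finset ℕ) :=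
  (facesC Y 2).filter fun e => ∀ v ∈ e, ({v} : Finset ℕ) ∈ A

/-- `Y` (a `dY`-complex) is an `α`-skeleton expander. -/
def SkelExpander (Y : Finset (Finset ℕ)) (dY : ℕ) (α : ℝ) : Prop :=
  ∀ A ⊆ facesC Y 1, normC Y dY (edgesIn Y A) ≤ 4 * (normC Y dY A ^ 2 + α * normC Y dY A)

/-- The `m`-skeleton of a complex (all faces of dimension at most `m`). -/
def skeleton (X : Finset (Finset ℕ)) (m : ℕ) : Finset (Finset ℕ) :=
  X.filter fun σ => σ.card ≤ m + 1

open scoped Classical in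
/-- `fatD X d kc η A j` is the set of fat faces `S_η^{k-j}(A)` where `kc = k+1`
is the cardinality of the faces of `A` (downward induction on `j`). -/
def fatD (X : Finset (Finset ℕ)) (d kc : ℕ) (η : ℝ) (A : Finset (Finset ℕ)) :
    ℕ → Finset (Finset ℕ)
  | 0 => A
  | j + 1 =>
    (facesC X (kc - (j + 1))).filter fun σ =>
      η ^ 2 ^ j ≤ normC (link X σ) (d - σ.card) (locF σ (fatD X d kc η A j))

/-- The fat faces `S_η^i(A)` of dimension `i` (with `-1 ≤ i ≤ k`), for a
`k`-dimensional cochain `A` of the `d`-complex `X`. -/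
def fatS (X : Finset (Finset ℕ)) (d k : ℕ) (η : ℝ) (A : Finset (Finset ℕ)) (i : ℤ) :
    Finset (Finset ℕ) :=
  fatD X d (k + 1) η A ((k : ℤ) - i).toNat

open scoped Classical in
/-- The fat ladders `L_η(A,σ)` sitting on a fat `i`-face `σ`. -/
def ladderL (X : Finset (Finset ℕ)) (d k : ℕ) (η : ℝ) (A : Finset (Finset ℕ))
    (i : ℤ) (σ : Finset ℕ) : Finset (Finset ℕ) :=
  A.filter fun t => ∃ c : ℤ → Finset ℕ, c i = σ ∧ c (k : ℤ) = t ∧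
    (∀ j : ℤ, i ≤ j → j ≤ (k : ℤ) → c j ∈ fatS X d k η A j) ∧
    (∀ j : ℤ, i ≤ j → j < (k : ℤ) → c j ⊆ c (j + 1))

/-- The `i`-fat-ladders `L_η(A,i) = ⋃_{σ ∈ S_η^i(A)} L_η(A,σ)`. -/
def ladderAll (X : Finset (Finset ℕ)) (d k : ℕ) (η : ℝ) (A : Finset (Finset ℕ))
    (i : ℤ) : Finset (Finset ℕ) :=
  (fatS X d k η A i).biUnion fun σ => ladderL X d k η A i σ

open scoped Classical in
/-- The degenerate faces `Υ_η(A)`: the `(k+1)`-dimensional faces containing a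
dead-end, i.e. two equal-dimensional fat faces whose intersection is a
codimension-1 non-fat face. -/
def UpsilonF (X : Finset (Finset ℕ)) (d k : ℕ) (η : ℝ) (A : Finset (Finset ℕ)) :
    Finset (Finset ℕ) :=
  (facesC X (k + 2)).filter fun p => ∃ i : ℤ, 0 ≤ i ∧ i ≤ (k : ℤ) ∧
    ∃ σ ∈ fatS X d k η A i, ∃ σ' ∈ fatS X d k η A i,
      σ ⊆ p ∧ σ' ⊆ p ∧ σ'.card = σ.card ∧ (σ ∩ σ').card + 1 = σ.card ∧
      σ ∩ σ' ∉ fatS X d k η A (i - 1)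

/-!
A fat `(i-1)`-face `σ` sees at least an `η^{2^{k-i}}` share of `S_η^i(A)` in its link, so by
Markov's inequality `η^{2^{k-i}} ‖S_η^{i-1}(A)‖ ≤ Σ_σ w(σ) ‖I_σ(S_η^i(A))‖_σ`. The right-hand
side is at most `‖S_η^i(A)‖`, because the weight of an `i`-face `τ` splits evenly among its
facets: `w(σ) · w_σ(τ \ σ) = w(τ) / |τ|`. Downward induction on `i` then gives
`η^{2^{k-i}} · η^{2^{k-i}} ‖S_η^{i-1}(A)‖ ≤ η^{2^{k-i}} ‖S_η^i(A)‖ ≤ ‖A‖`.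
-/

section Weights

variable (X : Finset (Finset ℕ)) (d : ℕ)

lemma weightC_nonneg (σ : Finset ℕ) : 0 ≤ weightC X d σ :=
  div_nonneg (Nat.cast_nonneg _) (Nat.cast_nonneg _)

lemma normC_nonneg (A : Finset (Finset ℕ)) : 0 ≤ normC X d A :=
  Finset.sum_nonneg fun σ _ => weightC_nonneg X d σ

lemma card_filter_facesC_link {σ ρ : Finset ℕ} (hσρ : Disjoint σ ρ) (c : ℕ) :
    ((facesC (link X σ) c).filter fun F => ρ ⊆ F).card
      = ((facesC X (c + σ.card)).filter fun F => σ ∪ ρ ⊆ F).card := by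
  symm
  refine Finset.card_bij (fun F _ => F \ σ) ?_ ?_ ?_
  · intro F hF
    simp only [facesC, link, Finset.mem_filter, Finset.mem_image, Finset.union_subset_iff] at hF ⊢
    obtain ⟨⟨hFX, hFcard⟩, hσF, hρF⟩ := hF
    refine ⟨⟨⟨F, ⟨hFX, hσF⟩, rfl⟩, ?_⟩,
      Finset.subset_sdiff.mpr ⟨hρF, hσρ.symm⟩⟩
    rw [Finset.card_sdiff_of_subset hσF, hFcard, Nat.add_sub_cancel]
  · intro F₁ h₁ F₂ h₂ h
    simp only [facesC, Finset.mem_filter, Finset.union_subset_iff] at h₁ h₂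
    rw [← Finset.sdiff_union_of_subset h₁.2.1, ← Finset.sdiff_union_of_subset h₂.2.1, h]
  · intro F' hF'
    simp only [facesC, link, Finset.mem_filter, Finset.mem_image] at hF'
    obtain ⟨⟨⟨F, ⟨hFX, hσF⟩, rfl⟩, hcard⟩, hρ⟩ := hF'
    refine ⟨F, ?_, rfl⟩
    simp only [facesC, Finset.mem_filter]
    refine ⟨⟨hFX, ?_⟩, Finset.union_subset hσF (Finset.subset_sdiff.mp hρ).1⟩
    rw [← hcard, Finset.card_sdiff_add_card_eq_card hσF]

lemma weightC_mul_weightC_link {m : ℕ} (hm : m ≤ d) {σ τ : Finset ℕ} (hστ : σ ⊆ τ)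
    (hσ : σ.card = m) (hτ : τ.card = m + 1) :
    weightC X d σ * weightC (link X σ) (d - m) (τ \ σ) = weightC X d τ / (m + 1) := by
  have hc : d - m + 1 + σ.card = d + 1 := by omega
  have hsd : (τ \ σ).card = 1 := by rw [Finset.card_sdiff_of_subset hστ, hτ, hσ]; omega
  have hnum :=
    card_filter_facesC_link X Finset.disjoint_sdiff (d - m + 1) (σ := σ) (ρ := τ \ σ)
  have hden := card_filter_facesC_link X (Finset.disjoint_empty_right σ) (d - m + 1)
  rw [hc, Finset.union_sdiff_of_subset hστ] at hnum
  simp only [hc, Finset.empty_subset, Finset.filter_true, Finset.union_empty] at hden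
  simp only [weightC, hsd, hnum, hden, hσ, hτ, Nat.choose_one_right]
  set Dσ := ((facesC X (d + 1)).filter fun F => σ ⊆ F).card
  set Dτ := ((facesC X (d + 1)).filter fun F => τ ⊆ F).card
  set N := (facesC X (d + 1)).card
  have hDτσ : Dτ ≤ Dσ :=
    Finset.card_le_card (Finset.monotone_filter_right _ fun F _ hF => hστ.trans hF)
  rcases Nat.eq_zero_or_pos Dσ with hσ0 | hσpos
  · simp [hσ0, Nat.le_zero.mp (hσ0 ▸ hDτσ)]
  have hN : 0 < N := hσpos.trans_le (Finset.card_filter_le _ _)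
  have hchoose :
      ((d + 1).choose (m + 1) : ℝ) * (m + 1) = (d + 1).choose m * (d - m + 1 : ℕ) := by
    have := Nat.choose_succ_right_eq (d + 1) m
    rw [show d + 1 - m = d - m + 1 by omega] at this
    exact_mod_cast this
  have : ((d + 1).choose (m + 1) : ℝ) ≠ 0 := by
    exact_mod_cast (Nat.choose_pos (by omega)).ne'
  have : ((d + 1).choose m : ℝ) ≠ 0 := by exact_mod_cast (Nat.choose_pos (by omega)).ne'
  push_cast at hchoose ⊢
  field_simp
  linear_combination (Dτ : ℝ) * hchoose

lemma normC_locF (σ : Finset ℕ) (B : Finset (Finset ℕ)) :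
    normC X d (locF σ B) = ∑ τ ∈ B.filter fun τ => σ ⊆ τ, weightC X d (τ \ σ) := by
  refine Finset.sum_image fun τ₁ h₁ τ₂ h₂ h => ?_
  simp only [Finset.coe_filter, Set.mem_ofPred_eq] at h₁ h₂
  rw [← Finset.sdiff_union_of_subset h₁.2, ← Finset.sdiff_union_of_subset h₂.2, h]

lemma sum_weightC_mul_normC_locF_le {m : ℕ} (hm : m ≤ d) {S B : Finset (Finset ℕ)}
    (hS : ∀ σ ∈ S, σ.card = m) (hB : ∀ τ ∈ B, τ.card = m + 1) :
    ∑ σ ∈ S, weightC X d σ * normC (link X σ) (d - σ.card) (locF σ B) ≤ normC X d B := by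
  have hsplit : ∀ σ ∈ S, weightC X d σ * normC (link X σ) (d - σ.card) (locF σ B)
      = ∑ τ ∈ B,
          if σ ⊆ τ then weightC X d σ * weightC (link X σ) (d - m) (τ \ σ) else 0 := by
    intro σ hσ
    rw [normC_locF, Finset.mul_sum, ← Finset.sum_filter, hS σ hσ]
  rw [Finset.sum_congr rfl hsplit, Finset.sum_comm]
  refine Finset.sum_le_sum fun τ hτ => ?_
  rw [← Finset.sum_filter]
  calc ∑ σ ∈ S.filter (· ⊆ τ), weightC X d σ * weightC (link X σ) (d - m) (τ \ σ)
      ≤ ∑ σ ∈ τ.powersetCard m, weightC X d σ * weightC (link X σ) (d - m) (τ \ σ) := by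
        refine Finset.sum_le_sum_of_subset_of_nonneg (fun σ hσ => ?_) fun σ _ _ =>
          mul_nonneg (weightC_nonneg _ _ _) (weightC_nonneg _ _ _)
        rw [Finset.mem_filter] at hσ
        exact Finset.mem_powersetCard.mpr ⟨hσ.2, hS σ hσ.1⟩
    _ = ∑ σ ∈ τ.powersetCard m, weightC X d τ / (m + 1) := by
        refine Finset.sum_congr rfl fun σ hσ => ?_
        rw [Finset.mem_powersetCard] at hσ
        exact weightC_mul_weightC_link X d hm hσ.1 hσ.2 (hB τ hτ)
    _ = weightC X d τ := by
        rw [Finset.sum_const, Finset.card_powersetCard, hB τ hτ, Nat.choose_succ_self_right,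
          nsmul_eq_mul]
        push_cast
        field_simp

lemma mul_normC_le_of_le_normC_locF {m : ℕ} (hm : m ≤ d) {ε : ℝ} {S B : Finset (Finset ℕ)}
    (hS : ∀ σ ∈ S, σ.card = m) (hB : ∀ τ ∈ B, τ.card = m + 1)
    (hfat : ∀ σ ∈ S, ε ≤ normC (link X σ) (d - σ.card) (locF σ B)) :
    ε * normC X d S ≤ normC X d B :=
  calc ε * normC X d S = ∑ σ ∈ S, weightC X d σ * ε := by
        rw [normC, Finset.mul_sum]; simp_rw [mul_comm]
    _ ≤ ∑ σ ∈ S, weightC X d σ * normC (link X σ) (d - σ.card) (locF σ B) :=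
        Finset.sum_le_sum fun σ hσ =>
          mul_le_mul_of_nonneg_left (hfat σ hσ) (weightC_nonneg X d σ)
    _ ≤ normC X d B := sum_weightC_mul_normC_locF_le X d hm hS hB

end Weights

section FatFaces

variable (X : Finset (Finset ℕ)) (d kc : ℕ) (η : ℝ) {A : Finset (Finset ℕ)}

lemma card_eq_of_mem_facesC {m : ℕ} {σ : Finset ℕ} (h : σ ∈ facesC X m) : σ.card = m :=
  (Finset.mem_filter.mp h).2

lemma fatD_subset_facesC (hA : A ⊆ facesC X kc) : ∀ j, fatD X d kc η A j ⊆ facesC X (kc - j)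
  | 0 => hA
  | _ + 1 => Finset.filter_subset _ _

lemma pow_mul_normC_fatD_le (hkc : kc ≤ d + 1) (hA : A ⊆ facesC X kc) (hη0 : 0 ≤ η)
    (hη1 : η ≤ 1) : ∀ j ≤ kc, η ^ 2 ^ j * normC X d (fatD X d kc η A j) ≤ normC X d A
  | 0, _ => by simpa [fatD] using mul_le_of_le_one_left (normC_nonneg X d A) hη1
  | j + 1, hj => by
    have ih := pow_mul_normC_fatD_le hkc hA hη0 hη1 j (by omega)
    have hstep : η ^ 2 ^ j * normC X d (fatD X d kc η A (j + 1))
        ≤ normC X d (fatD X d kc η A j) :=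
      mul_normC_le_of_le_normC_locF X d (m := kc - (j + 1)) (by omega)
        (fun σ hσ => card_eq_of_mem_facesC X (fatD_subset_facesC X d kc η hA (j + 1) hσ))
        (fun τ hτ => by
          rw [card_eq_of_mem_facesC X (fatD_subset_facesC X d kc η hA j hτ)]; omega)
        (fun σ hσ => (Finset.mem_filter.mp hσ).2)
    calc η ^ 2 ^ (j + 1) * normC X d (fatD X d kc η A (j + 1))
        = η ^ 2 ^ j * (η ^ 2 ^ j * normC X d (fatD X d kc η A (j + 1))) := by ring
      _ ≤ η ^ 2 ^ j * normC X d (fatD X d kc η A j) :=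
          mul_le_mul_of_nonneg_left hstep (pow_nonneg hη0 _)
      _ ≤ normC X d A := ih

end FatFaces

theorem statement_10_general (d k : ℕ) (hk : k ≤ d) (X : Finset (Finset ℕ))
    (A : Finset (Finset ℕ)) (hA : A ⊆ facesC X (k + 1))
    (η : ℝ) (hη0 : 0 < η) (hη1 : η < 1)
    (i : ℤ) (hi : -1 ≤ i) (hik : i ≤ (k : ℤ)) :
    normC X d (fatS X d k η A i) ≤ (η ^ 2 ^ ((k : ℤ) - i).toNat)⁻¹ * normC X d A := by
  rw [fatS, le_inv_mul_iff₀ (pow_pos hη0 _)]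
  exact pow_mul_normC_fatD_le X d (k + 1) η (by omega) hA hη0.le hη1.le _ (by omega)

/-- `‖S_η^i(A)‖ ≤ η^{-2^{k-i}} · ‖A‖` for `-1 ≤ i ≤ k`. -/
theorem statement_10 (d k : ℕ) (hk : k ≤ d) (X : Finset (Finset ℕ)) (hX : IsComplex X d)
    (A : Finset (Finset ℕ)) (hA : A ⊆ facesC X (k + 1))
    (η : ℝ) (hη0 : 0 < η) (hη1 : η < 1)
    (i : ℤ) (hi : -1 ≤ i) (hik : i ≤ (k : ℤ)) :
    normC X d (fatS X d k η A i) ≤ (η ^ 2 ^ ((k : ℤ) - i).toNat)⁻¹ * normC X d A :=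
  statement_10_general d k hk X A hA η hη0 hη1 i hi hik

end HDExpansion
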